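/- arXiv:2207.02510 — 4 statements merged into one kernel-verified Lean document; each statement's English description precedes it below -/
import Mathlib

section
/- For a linear map Φ : M_n(𝕂) → M_m(𝕂), the Choi matrix of the adjoint map Φ* (with respect to the trace inner product) satisfies C_{Φ*} = S* (C_Φ)ᵗ S, where S : 𝕂ᵐ ⊗ 𝕂ⁿ → 𝕂ⁿ ⊗ 𝕂ᵐ is the tensor swap operator. -/
open Matrix
open scoped ComplexOrder Kronecker

/-- Vectorization `Vec(A)` of a rectangular matrix: `Vec(A) = ∑ᵢⱼ aᵢⱼ eᵢ ⊗ eⱼ`. -/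
def vecOf {n m : ℕ} {𝕜 : Type*} (A : Matrix (Fin n) (Fin m) 𝕜) : Fin n × Fin m → 𝕜 :=
  fun x => A x.1 x.2

/-- The Choi matrix `C_Φ = ∑ᵢⱼ Eᵢⱼ ⊗ Φ(Eᵢⱼ)` of a map `Φ`. -/
def choi {𝕜 : Type*} [RCLike 𝕜] {n m : ℕ}
    (Φ : Matrix (Fin n) (Fin n) 𝕜 → Matrix (Fin m) (Fin m) 𝕜) :
    Matrix (Fin n × Fin m) (Fin n × Fin m) 𝕜 :=
  ∑ i : Fin n, ∑ j : Fin n, Matrix.single i j 1 ⊗ₖ Φ (Matrix.single i j 1)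

/-- A map between matrix algebras is positive if it commutes with the adjoint and
preserves positive semidefiniteness. -/
def IsPosMap {𝕜 : Type*} [RCLike 𝕜] {I J : Type*} [Fintype I] [Fintype J]
    (Φ : Matrix I I 𝕜 → Matrix J J 𝕜) : Prop :=
  (∀ A, Φ Aᴴ = (Φ A)ᴴ) ∧ ∀ A, A.PosSemidef → (Φ A).PosSemidef

/-- The ampliation `Φ ⊗ id_p` of a map `Φ`. -/
def amplify {𝕜 : Type*} [RCLike 𝕜] {n m : ℕ}
    (Φ : Matrix (Fin n) (Fin n) 𝕜 → Matrix (Fin m) (Fin m) 𝕜) (p : ℕ) :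
    Matrix (Fin n × Fin p) (Fin n × Fin p) 𝕜 → Matrix (Fin m × Fin p) (Fin m × Fin p) 𝕜 :=
  fun M => Matrix.of fun x y => Φ (Matrix.of fun i j => M (i, x.2) (j, y.2)) x.1 y.1

/-- `Φ` is `p`-positive if `Φ ⊗ id_p` is positive. -/
def IsPPositive {𝕜 : Type*} [RCLike 𝕜] {n m : ℕ} (p : ℕ)
    (Φ : Matrix (Fin n) (Fin n) 𝕜 → Matrix (Fin m) (Fin m) 𝕜) : Prop :=
  IsPosMap (amplify Φ p)

/-- The complexification `Φ̃(X + iY) = Φ(X) + iΦ(Y)` of a real linear map. -/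
noncomputable def complexify {n m : ℕ}
    (Φ : Matrix (Fin n) (Fin n) ℝ →ₗ[ℝ] Matrix (Fin m) (Fin m) ℝ) :
    Matrix (Fin n) (Fin n) ℂ → Matrix (Fin m) (Fin m) ℂ :=
  fun M => (Φ (Matrix.of fun i j => (M i j).re)).map Complex.ofReal
    + Complex.I • (Φ (Matrix.of fun i j => (M i j).im)).map Complex.ofReal

/-- The operator (spectral) norm of a real matrix. -/
noncomputable def opNorm {n m : ℕ} (A : Matrix (Fin n) (Fin m) ℝ) : ℝ :=
  ‖(Matrix.toEuclideanLin A).toContinuousLinearMap‖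

/-- The cone `SEP_p(𝕜ⁿ ⊗ 𝕜ᵐ)` of sums `∑ⱼ Vec(Aⱼ)Vec(Aⱼ)*` with `rank Aⱼ ≤ p`. -/
def SEPp (𝕜 : Type*) [RCLike 𝕜] (n m p : ℕ) :
    Set (Matrix (Fin n × Fin m) (Fin n × Fin m) 𝕜) :=
  {M | ∃ (k : ℕ) (A : Fin k → Matrix (Fin n) (Fin m) 𝕜),
    (∀ j, (A j).rank ≤ p) ∧
    M = ∑ j, vecMulVec (vecOf (A j)) (star (vecOf (A j)))}

/-- The cone of separable matrices: sums of Kronecker products of PSD matrices. -/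
def SEPProd (𝕜 : Type*) [RCLike 𝕜] (n m : ℕ) :
    Set (Matrix (Fin n × Fin m) (Fin n × Fin m) 𝕜) :=
  {M | ∃ (k : ℕ) (A : Fin k → Matrix (Fin n) (Fin n) 𝕜) (B : Fin k → Matrix (Fin m) (Fin m) 𝕜),
    (∀ j, (A j).PosSemidef) ∧ (∀ j, (B j).PosSemidef) ∧ M = ∑ j, A j ⊗ₖ B j}

/-- Partial transpose on the first tensor factor: `τ_n ⊗ id_m`. -/
def ptransposeFst {𝕜 : Type*} {n m : ℕ} (M : Matrix (Fin n × Fin m) (Fin n × Fin m) 𝕜) :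
    Matrix (Fin n × Fin m) (Fin n × Fin m) 𝕜 :=
  Matrix.of fun x y => M (y.1, x.2) (x.1, y.2)

/-- Partial transpose on the second tensor factor: `id_n ⊗ τ_m`. -/
def ptransposeSnd {𝕜 : Type*} {n m : ℕ} (M : Matrix (Fin n × Fin m) (Fin n × Fin m) 𝕜) :
    Matrix (Fin n × Fin m) (Fin n × Fin m) 𝕜 :=
  Matrix.of fun x y => M (x.1, y.2) (y.1, x.2)

/-- The tensor swap `S : 𝕜ᵐ ⊗ 𝕜ⁿ → 𝕜ⁿ ⊗ 𝕜ᵐ` as a matrix. -/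
def swapMat (𝕜 : Type*) [RCLike 𝕜] (n m : ℕ) : Matrix (Fin n × Fin m) (Fin m × Fin n) 𝕜 :=
  Matrix.of fun x y => if x.1 = y.2 ∧ x.2 = y.1 then 1 else 0

/-- The Choi matrix of the adjoint map satisfies `C_{Φ*} = S* (C_Φ)ᵗ S`, where `S` is the
tensor swap operator. -/
theorem stmt5 {𝕜 : Type*} [RCLike 𝕜] {n m : ℕ}
    (Φ : Matrix (Fin n) (Fin n) 𝕜 →ₗ[𝕜] Matrix (Fin m) (Fin m) 𝕜)
    (Ψ : Matrix (Fin m) (Fin m) 𝕜 →ₗ[𝕜] Matrix (Fin n) (Fin n) 𝕜)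
    (hΨ : ∀ (A : Matrix (Fin n) (Fin n) 𝕜) (B : Matrix (Fin m) (Fin m) 𝕜),
      (Ψ B * A).trace = (B * Φ A).trace) :
    choi ⇑Ψ = (swapMat 𝕜 n m)ᴴ * (choi ⇑Φ)ᵀ * swapMat 𝕜 n m := by
  ext ⟨i,a⟩ ⟨j,b⟩
  have key := hΨ (Matrix.single b a 1) (Matrix.single i j 1)
  have hL : (Ψ (Matrix.single i j 1) * Matrix.single b a 1).trace
      = Ψ (Matrix.single i j 1) a b := by
    simp [Matrix.trace, Matrix.mul_apply, Matrix.single, Matrix.diag, Finset.sum_ite_eq, Finset.sum_ite_eq', ite_and]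
  have hR : (Matrix.single i j 1 * Φ (Matrix.single b a 1)).trace
      = Φ (Matrix.single b a 1) j i := by
    simp [Matrix.trace, Matrix.mul_apply, Matrix.single, Matrix.diag, Finset.sum_ite_eq, Finset.sum_ite_eq', ite_and]
  rw [hL, hR] at key
  have hchoiL : choi ⇑Ψ (i,a) (j,b) = Ψ (Matrix.single i j 1) a b := by
    simp [choi, Matrix.sum_apply, Matrix.kroneckerMap_apply, Matrix.single,
      Finset.sum_ite_eq, ite_and]
  have hchoiR : choi ⇑Φ (b,j) (a,i) = Φ (Matrix.single b a 1) j i := by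
    simp [choi, Matrix.sum_apply, Matrix.kroneckerMap_apply, Matrix.single,
      Finset.sum_ite_eq, ite_and]
  have hRHS : ((swapMat 𝕜 n m)ᴴ * (choi ⇑Φ)ᵀ * swapMat 𝕜 n m) (i,a) (j,b)
      = choi ⇑Φ (b,j) (a,i) := by
    simp [Matrix.mul_apply, swapMat, Matrix.conjTranspose_apply, Fintype.sum_prod_type,
      Finset.sum_ite_eq, Finset.sum_ite_eq', ite_and, apply_ite, Matrix.transpose_apply]
  rw [hRHS, hchoiL, hchoiR, key]
end

section
/- If a linear map Φ : M_n(ℝ) → M_m(ℝ) is 2p-positive, then its complexification Φ̃ : M_n(ℂ) → M_m(ℂ) is p-positive. In particular, if Φ is completely positive then so is Φ̃. -/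
open Matrix
open scoped ComplexOrder Kronecker

open Complex

/-- index equivalence -/
def esum (p : ℕ) : Fin p ⊕ Fin p ≃ Fin (2*p) := finSumFinEquiv.trans (finCongr (two_mul p).symm)

/-- the doubled (realified) matrix [[A, -B],[B, A]] -/
def dbl {α p : ℕ} (A B : Matrix (Fin α × Fin p) (Fin α × Fin p) ℝ) :
    Matrix (Fin α × Fin (2*p)) (Fin α × Fin (2*p)) ℝ :=
  Matrix.of fun x y =>
    match (esum p).symm x.2, (esum p).symm y.2 with
    | .inl a, .inl b => A (x.1, a) (y.1, b)
    | .inl a, .inr b => -B (x.1, a) (y.1, b)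
    | .inr a, .inl b => B (x.1, a) (y.1, b)
    | .inr a, .inr b => A (x.1, a) (y.1, b)

/-- interleaved real vector -/
def wvec {α p : ℕ} (a b : Fin α × Fin p → ℝ) : Fin α × Fin (2*p) → ℝ :=
  fun x => match (esum p).symm x.2 with
  | .inl u => a (x.1, u)
  | .inr u => b (x.1, u)

section lemmas
variable {α p : ℕ} (A B : Matrix (Fin α × Fin p) (Fin α × Fin p) ℝ)

@[simp] lemma dbl_ll (i j : Fin α) (a b : Fin p) :
    dbl A B (i, esum p (.inl a)) (j, esum p (.inl b)) = A (i, a) (j, b) := by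
  simp [dbl]
@[simp] lemma dbl_lr (i j : Fin α) (a b : Fin p) :
    dbl A B (i, esum p (.inl a)) (j, esum p (.inr b)) = -B (i, a) (j, b) := by
  simp [dbl]
@[simp] lemma dbl_rl (i j : Fin α) (a b : Fin p) :
    dbl A B (i, esum p (.inr a)) (j, esum p (.inl b)) = B (i, a) (j, b) := by
  simp [dbl]
@[simp] lemma dbl_rr (i j : Fin α) (a b : Fin p) :
    dbl A B (i, esum p (.inr a)) (j, esum p (.inr b)) = A (i, a) (j, b) := by
  simp [dbl]
@[simp] lemma wvec_l (a b : Fin α × Fin p → ℝ) (i : Fin α) (u : Fin p) :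
    wvec a b (i, esum p (.inl u)) = a (i, u) := by simp [wvec]
@[simp] lemma wvec_r (a b : Fin α × Fin p → ℝ) (i : Fin α) (u : Fin p) :
    wvec a b (i, esum p (.inr u)) = b (i, u) := by simp [wvec]

lemma sum_split (f : Fin α × Fin (2*p) → ℝ) :
    ∑ x, f x = ∑ u : Fin α × Fin p, f (u.1, esum p (.inl u.2))
      + ∑ u : Fin α × Fin p, f (u.1, esum p (.inr u.2)) := by
  rw [← Equiv.sum_comp (((Equiv.prodSumDistrib (Fin α) (Fin p) (Fin p)).symm.trans
    ((Equiv.refl (Fin α)).prodCongr (esum p)))) f, Fintype.sum_sum_type]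
  rfl

end lemmas

lemma form_re {ι : Type*} [Fintype ι] (M : Matrix ι ι ℂ) (z : ι → ℂ) :
    (star z ⬝ᵥ M *ᵥ z).re = ∑ u, ∑ v,
      ((z u).re * ((M u v).re * (z v).re) + (z u).im * ((M u v).re * (z v).im)
        - (z u).re * ((M u v).im * (z v).im) + (z u).im * ((M u v).im * (z v).re)) := by
  simp only [dotProduct, mulVec, Finset.mul_sum, Complex.re_sum]
  refine Finset.sum_congr rfl fun u _ => Finset.sum_congr rfl fun v _ => ?_
  simp [Complex.mul_re, Complex.mul_im]
  ring

lemma form_im {ι : Type*} [Fintype ι] (M : Matrix ι ι ℂ) (z : ι → ℂ) :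
    (star z ⬝ᵥ M *ᵥ z).im = ∑ u, ∑ v,
      ((z u).re * ((M u v).re * (z v).im) - (z u).im * ((M u v).re * (z v).re)
        + (z u).re * ((M u v).im * (z v).re) + (z u).im * ((M u v).im * (z v).im)) := by
  simp only [dotProduct, mulVec, Finset.mul_sum, Complex.im_sum]
  refine Finset.sum_congr rfl fun u _ => Finset.sum_congr rfl fun v _ => ?_
  simp [Complex.mul_re, Complex.mul_im]
  ring

lemma wvec_dbl_form {α p : ℕ} (A B : Matrix (Fin α × Fin p) (Fin α × Fin p) ℝ)
    (a b : Fin α × Fin p → ℝ) :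
    wvec a b ⬝ᵥ dbl A B *ᵥ wvec a b = ∑ u, ∑ v,
      (a u * (A u v * a v) + b u * (A u v * b v) - a u * (B u v * b v) + b u * (B u v * a v)) := by
  have h : wvec a b ⬝ᵥ dbl A B *ᵥ wvec a b
      = ∑ x, wvec a b x * ∑ y, dbl A B x y * wvec a b y := by
    simp [dotProduct, mulVec]
  rw [h, sum_split]
  have inner : ∀ x : Fin α × Fin (2*p), ∑ y, dbl A B x y * wvec a b y
      = ∑ v : Fin α × Fin p, dbl A B x (v.1, esum p (.inl v.2)) * a v
        + ∑ v : Fin α × Fin p, dbl A B x (v.1, esum p (.inr v.2)) * b v := by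
    intro x
    rw [sum_split]
    simp
  simp only [inner]
  simp only [dbl_ll, dbl_lr, dbl_rl, dbl_rr, wvec_l, wvec_r]
  rw [← Finset.sum_add_distrib]
  refine Finset.sum_congr rfl fun u _ => ?_
  simp only [mul_add, neg_mul, mul_neg, Finset.mul_sum, ← Finset.sum_add_distrib,
    ← Finset.sum_neg_distrib, sub_eq_add_neg]
  refine Finset.sum_congr rfl fun v _ => ?_
  ring

section amp
variable {n m : ℕ} (Φ : Matrix (Fin n) (Fin n) ℝ →ₗ[ℝ] Matrix (Fin m) (Fin m) ℝ)

lemma amplify_dbl (p : ℕ) (X Y : Matrix (Fin n × Fin p) (Fin n × Fin p) ℝ) :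
    amplify (⇑Φ) (2*p) (dbl X Y) = dbl (amplify (⇑Φ) p X) (amplify (⇑Φ) p Y) := by
  ext ⟨x1, s⟩ ⟨y1, t⟩
  obtain ⟨s', rfl⟩ : ∃ s', s = esum p s' := ⟨(esum p).symm s, ((esum p).apply_symm_apply s).symm⟩
  obtain ⟨t', rfl⟩ : ∃ t', t = esum p t' := ⟨(esum p).symm t, ((esum p).apply_symm_apply t).symm⟩
  rcases s' with a | a <;> rcases t' with b | b <;>
    simp only [amplify, dbl_ll, dbl_lr, dbl_rl, dbl_rr, Matrix.of_apply] <;>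
    first
      | rfl
      | (have : (Matrix.of fun i j => -Y (i, a) (j, b)) = -(Matrix.of fun i j => Y (i, a) (j, b)) := rfl
         rw [this, map_neg]
         rfl)

/-- A positive ampliation with q ≥ 1 forces Φ to preserve transpose. -/
lemma phi_transpose {q : ℕ} (hq : 0 < q) (h : IsPosMap (amplify (⇑Φ) q))
    (A : Matrix (Fin n) (Fin n) ℝ) : Φ Aᵀ = (Φ A)ᵀ := by
  have s0 : Fin q := ⟨0, hq⟩
  set M : Matrix (Fin n × Fin q) (Fin n × Fin q) ℝ := Matrix.of fun x y => A x.1 y.1 with hM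
  have h1 := h.1 M
  have h2 : Mᴴ = Matrix.of fun x y : Fin n × Fin q => Aᵀ x.1 y.1 := by
    ext x y; simp [hM, conjTranspose_apply]
  rw [h2] at h1
  ext a b
  have := congrFun (congrFun h1 (a, s0)) (b, s0)
  simp [amplify, conjTranspose_apply, hM] at this; exact this

lemma amplify_transpose {p : ℕ} (hT : ∀ A : Matrix (Fin n) (Fin n) ℝ, Φ Aᵀ = (Φ A)ᵀ)
    (X : Matrix (Fin n × Fin p) (Fin n × Fin p) ℝ) :
    (amplify (⇑Φ) p X)ᵀ = amplify (⇑Φ) p Xᵀ := by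
  ext ⟨x1, s⟩ ⟨y1, t⟩
  show Φ (Matrix.of fun i j => X (i, t) (j, s)) y1 x1
    = Φ (Matrix.of fun i j => Xᵀ (i, s) (j, t)) x1 y1
  have h1 : (Matrix.of fun i j => Xᵀ (i, s) (j, t))
      = (Matrix.of fun i j => X (i, t) (j, s))ᵀ := by
    ext i j; simp
  rw [h1, hT]
  rfl

lemma dot_flip {ι : Type*} [Fintype ι] (v w : ι → ℝ) (A : Matrix ι ι ℝ) :
    v ⬝ᵥ A *ᵥ w = w ⬝ᵥ Aᵀ *ᵥ v := by
  rw [dotProduct_mulVec, dotProduct_comm, mulVec_transpose]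

/-- realification of a complex PSD matrix is PSD -/
lemma dbl_posSemidef {α p : ℕ} (M : Matrix (Fin α × Fin p) (Fin α × Fin p) ℂ)
    (hM : M.PosSemidef) :
    (dbl (Matrix.of fun x y => (M x y).re) (Matrix.of fun x y => (M x y).im)).PosSemidef := by
  set X : Matrix (Fin α × Fin p) (Fin α × Fin p) ℝ := Matrix.of fun x y => (M x y).re with hX
  set Y : Matrix (Fin α × Fin p) (Fin α × Fin p) ℝ := Matrix.of fun x y => (M x y).im with hY
  have hsym : ∀ u v, M v u = star (M u v) := fun u v => by
    have := hM.1; rw [Matrix.IsHermitian] at this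
    exact (congrFun (congrFun this.symm v) u).trans (by simp [conjTranspose_apply])
  have hXs : ∀ u v, X v u = X u v := fun u v => by
    simp [hX, hsym u v]
  have hYs : ∀ u v, Y v u = -Y u v := fun u v => by
    simp [hY, hsym u v]
  apply PosSemidef.of_dotProduct_mulVec_nonneg
  · rw [Matrix.IsHermitian]
    ext ⟨x1, s⟩ ⟨y1, t⟩
    obtain ⟨s', rfl⟩ : ∃ s', s = esum p s' := ⟨(esum p).symm s, ((esum p).apply_symm_apply s).symm⟩
    obtain ⟨t', rfl⟩ : ∃ t', t = esum p t' := ⟨(esum p).symm t, ((esum p).apply_symm_apply t).symm⟩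
    rcases s' with a | a <;> rcases t' with b | b <;>
      simp [conjTranspose_apply, hXs (x1, a), hYs (x1, a)]
  · intro w
    set a : Fin α × Fin p → ℝ := fun u => w (u.1, esum p (.inl u.2)) with ha
    set b : Fin α × Fin p → ℝ := fun u => w (u.1, esum p (.inr u.2)) with hb
    have hw : w = wvec a b := by
      funext ⟨i, s⟩
      obtain ⟨s', rfl⟩ : ∃ s', s = esum p s' :=
        ⟨(esum p).symm s, ((esum p).apply_symm_apply s).symm⟩
      rcases s' with u | u <;> simp [ha, hb, wvec]
    have hstar : star w = w := by funext u; simp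
    rw [hstar, hw, wvec_dbl_form]
    set z : Fin α × Fin p → ℂ := fun u => ⟨a u, b u⟩ with hz
    have hform := form_re M z
    have hpos := hM.dotProduct_mulVec_nonneg z
    rw [Complex.le_def] at hpos
    have h0 : (0 : ℂ).re = 0 := rfl
    have key : ∑ u, ∑ v,
        (a u * (X u v * a v) + b u * (X u v * b v) - a u * (Y u v * b v) + b u * (Y u v * a v))
        = (star z ⬝ᵥ M *ᵥ z).re := by
      rw [hform]
      rfl
    rw [key]
    simpa using hpos.1

/-- from PSD of the realification back to complex PSD -/
lemma posSemidef_of_dbl {α p : ℕ} (A B : Matrix (Fin α × Fin p) (Fin α × Fin p) ℝ)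
    (hA : ∀ u v, A v u = A u v) (hB : ∀ u v, B v u = -B u v)
    (h : (dbl A B).PosSemidef) :
    (A.map (Complex.ofReal) + Complex.I • B.map (Complex.ofReal)).PosSemidef := by
  set T : Matrix (Fin α × Fin p) (Fin α × Fin p) ℂ :=
    A.map (Complex.ofReal) + Complex.I • B.map (Complex.ofReal) with hT
  have hTre : ∀ u v, (T u v).re = A u v := fun u v => by
    simp [hT, Matrix.add_apply, Matrix.map_apply, Matrix.smul_apply]
  have hTim : ∀ u v, (T u v).im = B u v := fun u v => by
    simp [hT, Matrix.add_apply, Matrix.map_apply, Matrix.smul_apply]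
  apply PosSemidef.of_dotProduct_mulVec_nonneg
  · rw [Matrix.IsHermitian]
    ext u v
    apply Complex.ext
    · simp [conjTranspose_apply, hTre, hA u v]
    · simp [conjTranspose_apply, hTim, hB u v]
  · intro z
    set a : Fin α × Fin p → ℝ := fun u => (z u).re with ha
    set b : Fin α × Fin p → ℝ := fun u => (z u).im with hb
    rw [Complex.le_def]
    have h0re : (0 : ℂ).re = 0 := rfl
    have h0im : (0 : ℂ).im = 0 := rfl
    constructor
    · have key : (star z ⬝ᵥ T *ᵥ z).re = wvec a b ⬝ᵥ dbl A B *ᵥ wvec a b := by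
        rw [form_re, wvec_dbl_form]
        refine Finset.sum_congr rfl fun u _ => Finset.sum_congr rfl fun v _ => ?_
        rw [hTre, hTim]
      rw [h0re, key]
      have hstar : star (wvec a b) = wvec a b := by funext u; simp
      have := h.dotProduct_mulVec_nonneg (wvec a b)
      rwa [hstar] at this
    · have key : (star z ⬝ᵥ T *ᵥ z).im
          = a ⬝ᵥ A *ᵥ b - b ⬝ᵥ A *ᵥ a + a ⬝ᵥ B *ᵥ a + b ⬝ᵥ B *ᵥ b := by
        rw [form_im]
        simp only [dotProduct, mulVec, Finset.mul_sum, ← Finset.sum_sub_distrib,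
          ← Finset.sum_add_distrib]
        refine Finset.sum_congr rfl fun u _ => Finset.sum_congr rfl fun v _ => ?_
        rw [hTre, hTim]
      have hAT : Aᵀ = A := by ext u v; exact hA u v
      have hBT : Bᵀ = -B := by ext u v; simpa using hB u v
      have e1 : a ⬝ᵥ A *ᵥ b = b ⬝ᵥ A *ᵥ a := by rw [dot_flip, hAT]
      have e2 : a ⬝ᵥ B *ᵥ a = 0 := by
        have h2 := dot_flip a a B
        rw [hBT, neg_mulVec, dotProduct_neg] at h2
        linarith
      have e3 : b ⬝ᵥ B *ᵥ b = 0 := by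
        have h2 := dot_flip b b B
        rw [hBT, neg_mulVec, dotProduct_neg] at h2
        linarith
      show (0:ℂ).im = _
      rw [key, e1, e2, e3]
      simp

lemma amplify_neg (p : ℕ) (X : Matrix (Fin n × Fin p) (Fin n × Fin p) ℝ) :
    amplify (⇑Φ) p (-X) = -amplify (⇑Φ) p X := by
  ext ⟨x1, s⟩ ⟨y1, t⟩
  show Φ (Matrix.of fun i j => (-X) (i, s) (j, t)) x1 y1 = _
  have : (Matrix.of fun i j => (-X) (i, s) (j, t)) = -(Matrix.of fun i j => X (i, s) (j, t)) := by
    ext i j; simp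
  rw [this, map_neg]
  rfl

lemma amplify_complexify (p : ℕ) (M : Matrix (Fin n × Fin p) (Fin n × Fin p) ℂ) :
    amplify (complexify Φ) p M
      = (amplify (⇑Φ) p (Matrix.of fun x y => (M x y).re)).map (Complex.ofReal)
        + Complex.I • (amplify (⇑Φ) p (Matrix.of fun x y => (M x y).im)).map (Complex.ofReal) := by
  ext ⟨x1, s⟩ ⟨y1, t⟩
  rfl

lemma complexify_conjTranspose (hT : ∀ A : Matrix (Fin n) (Fin n) ℝ, Φ Aᵀ = (Φ A)ᵀ)
    (C : Matrix (Fin n) (Fin n) ℂ) : complexify Φ Cᴴ = (complexify Φ C)ᴴ := by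
  have h1 : (Matrix.of fun i j => (Cᴴ i j).re) = (Matrix.of fun i j => (C i j).re)ᵀ := by
    ext i j; simp [conjTranspose_apply]
  have h2 : (Matrix.of fun i j => (Cᴴ i j).im) = -(Matrix.of fun i j => (C i j).im)ᵀ := by
    ext i j; simp [conjTranspose_apply]
  show (Φ (Matrix.of fun i j => (Cᴴ i j).re)).map Complex.ofReal
      + Complex.I • (Φ (Matrix.of fun i j => (Cᴴ i j).im)).map Complex.ofReal = _
  rw [h1, h2, hT, map_neg, hT]
  ext x y
  apply Complex.ext <;>
    simp [conjTranspose_apply, Matrix.add_apply, Matrix.map_apply, Matrix.smul_apply,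
      complexify]

lemma main (p : ℕ) (h : IsPPositive (2*p) ⇑Φ) : IsPPositive p (complexify Φ) := by
  rcases Nat.eq_zero_or_pos p with rfl | hp
  · constructor
    · intro A
      ext ⟨x1, x2⟩ y
      exact x2.elim0
    · intro A hA
      apply PosSemidef.of_dotProduct_mulVec_nonneg
      · ext ⟨x1, x2⟩ y
        exact x2.elim0
      · intro x
        have hempty : Finset.univ (α := Fin m × Fin 0) = ∅ := by
          ext ⟨a, b⟩; exact b.elim0
        show (0:ℂ) ≤ _
        rw [show star x ⬝ᵥ _ *ᵥ x = 0 by simp [dotProduct, hempty]]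
  · have hq : 0 < 2*p := by omega
    have hT := phi_transpose Φ hq h
    constructor
    · intro M
      ext ⟨x1, s⟩ ⟨y1, t⟩
      have hblk : (Matrix.of fun i j => Mᴴ (i, s) (j, t))
          = (Matrix.of fun i j => M (i, t) (j, s))ᴴ := by
        ext i j; simp [conjTranspose_apply]
      show complexify Φ (Matrix.of fun i j => Mᴴ (i, s) (j, t)) x1 y1 = _
      rw [hblk, complexify_conjTranspose Φ hT]
      rfl
    · intro M hM
      rw [amplify_complexify]
      set Xc : Matrix (Fin n × Fin p) (Fin n × Fin p) ℝ :=
        Matrix.of fun x y => (M x y).re with hXc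
      set Yc : Matrix (Fin n × Fin p) (Fin n × Fin p) ℝ :=
        Matrix.of fun x y => (M x y).im with hYc
      have hXs : Xcᵀ = Xc := by
        ext u v
        have := hM.1
        rw [Matrix.IsHermitian] at this
        have h2 := congrFun (congrFun this u) v
        simp only [conjTranspose_apply] at h2
        simp [hXc, ← h2]
      have hYs : Ycᵀ = -Yc := by
        ext u v
        have := hM.1
        rw [Matrix.IsHermitian] at this
        have h2 := congrFun (congrFun this u) v
        simp only [conjTranspose_apply] at h2
        simp [hYc, ← h2]
      apply posSemidef_of_dbl
      · intro u v
        have h1 := amplify_transpose Φ hT Xc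
        rw [hXs] at h1
        exact congrFun (congrFun h1 u) v
      · intro u v
        have h1 := amplify_transpose Φ hT Yc
        rw [hYs, amplify_neg] at h1
        simpa using congrFun (congrFun h1 u) v
      · rw [← amplify_dbl]
        exact h.2 _ (dbl_posSemidef M hM)

end amp

/-- If a real linear map is `2p`-positive then its complexification is `p`-positive;
in particular, if it is completely positive then so is its complexification. -/
theorem stmt8 {n m : ℕ} (p : ℕ)
    (Φ : Matrix (Fin n) (Fin n) ℝ →ₗ[ℝ] Matrix (Fin m) (Fin m) ℝ) :
    (IsPPositive (2 * p) ⇑Φ → IsPPositive p (complexify Φ)) ∧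
    ((∀ q, IsPPositive q ⇑Φ) → ∀ q, IsPPositive q (complexify Φ)) := by
  exact ⟨fun h => main Φ p h, fun h q => main Φ q (h (2*q))⟩
end

section
/- Every real positive semidefinite matrix P ∈ M_n(ℝ) ⊗ M_m(ℝ) that is ℂ-p-separable is ℝ-2p-separable. More precisely, CSEP_p(ℝⁿ⊗ℝᵐ) equals the set of sums Σ_j Vec(X_j)Vec(X_j)ᵗ + Vec(Y_j)Vec(Y_j)ᵗ over real matrices X_j, Y_j ∈ M_{n,m}(ℝ) with rank(X_j + iY_j) ≤ p, and CSEP_p(ℝⁿ⊗ℝᵐ) ⊆ SEP_{2p}(ℝⁿ⊗ℝᵐ). -/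
open Matrix
open scoped ComplexOrder Kronecker

section AuxStmt12
section RankAux
open Module Submodule


private lemma li_ofReal {ι : Type*} {N : ℕ} {v : ι → (Fin N → ℝ)}
    (hv : LinearIndependent ℝ v) :
    LinearIndependent ℂ (fun i => (fun a => ((v i a : ℝ) : ℂ))) := by
  rw [linearIndependent_iff'] at hv ⊢
  intro s g hg i hi
  have h1 : ∀ a : Fin N, ∑ j ∈ s, g j * ((v j a : ℝ) : ℂ) = 0 := by
    intro a
    have := congrFun hg a
    simpa [Finset.sum_apply] using this
  have hre : ∀ j ∈ s, (g j).re = 0 := by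
    refine hv s (fun j => (g j).re) (funext fun a => ?_)
    have := congrArg Complex.re (h1 a)
    simpa [Finset.sum_apply, Complex.re_sum, Complex.mul_re] using this
  have him : ∀ j ∈ s, (g j).im = 0 := by
    refine hv s (fun j => (g j).im) (funext fun a => ?_)
    have := congrArg Complex.im (h1 a)
    simpa [Finset.sum_apply, Complex.im_sum, Complex.mul_im] using this
  exact Complex.ext (hre i hi) (him i hi)

private lemma rank_le_rank_map_ofReal {N M : ℕ} (X : Matrix (Fin N) (Fin M) ℝ) :
    X.rank ≤ (X.map Complex.ofReal).rank := by
  classical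
  obtain ⟨t, hts, hspan, hli⟩ := exists_linearIndependent ℝ (Set.range Xᵀ)
  have htfin : t.Finite := (Set.finite_range Xᵀ).subset hts
  haveI : Fintype t := htfin.fintype
  have h1 : X.rank = Fintype.card t := by
    rw [Matrix.rank_eq_finrank_span_cols]
    change finrank ℝ (span ℝ (Set.range Xᵀ)) = _
    rw [← hspan, finrank_span_set_eq_card hli,
      Set.toFinset_card]
  set w : t → (Fin N → ℂ) := fun x => fun a => (((x : Fin N → ℝ)) a : ℂ) with hw_def
  have hw : LinearIndependent ℂ w := li_ofReal hli
  have h3 : span ℂ (Set.range w) ≤ span ℂ (Set.range (X.map Complex.ofReal)ᵀ) := by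
    rw [Submodule.span_le]
    rintro _ ⟨x, rfl⟩
    obtain ⟨j, hj⟩ := hts x.2
    refine Submodule.subset_span ⟨j, ?_⟩
    funext a
    simp [hw_def, ← hj]
  have h2 : Fintype.card t = finrank ℂ (span ℂ (Set.range w)) :=
    (finrank_span_eq_card hw).symm
  rw [h1, Matrix.rank_eq_finrank_span_cols, h2]
  exact Submodule.finrank_mono h3

private lemma matrix_rank_add_le {K : Type*} [Field K] {N M : ℕ}
    (A B : Matrix (Fin N) (Fin M) K) : (A + B).rank ≤ A.rank + B.rank := by
  have h : LinearMap.range (A + B).mulVecLin ≤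
      LinearMap.range A.mulVecLin ⊔ LinearMap.range B.mulVecLin := by
    rintro _ ⟨x, rfl⟩
    rw [Matrix.mulVecLin_add, LinearMap.add_apply]
    exact Submodule.add_mem_sup ⟨x, rfl⟩ ⟨x, rfl⟩
  exact (Submodule.finrank_mono h).trans
    (Submodule.finrank_add_le_finrank_add_finrank _ _)

private lemma matrix_rank_smul_le {K : Type*} [Field K] {N M : ℕ} (c : K)
    (A : Matrix (Fin N) (Fin M) K) : (c • A).rank ≤ A.rank := by
  have h : c • A = (c • (1 : Matrix (Fin N) (Fin N) K)) * A := by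
    rw [Matrix.smul_mul, Matrix.one_mul]
  rw [h]
  exact Matrix.rank_mul_le_right _ _

private lemma rank_conj {N M : ℕ} (A : Matrix (Fin N) (Fin M) ℂ) :
    (A.map (starRingEnd ℂ)).rank = A.rank := by
  have h : A.map (starRingEnd ℂ) = (Aᴴ)ᵀ := by
    ext i j
    simp [Matrix.conjTranspose_apply]
  rw [h, Matrix.rank_transpose, Matrix.rank_conjTranspose]

private lemma posSemidef_vecMulVec_self {ι : Type*} [Fintype ι] [DecidableEq ι] (v : ι → ℝ) :
    (vecMulVec v v).PosSemidef := by
  have h : vecMulVec v v = (replicateRow Unit v)ᴴ * replicateRow Unit v := by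
    ext i j
    simp [Matrix.mul_apply, Matrix.vecMulVec_apply, Matrix.conjTranspose_apply,
      Matrix.replicateRow_apply]
  rw [h]
  exact Matrix.posSemidef_conjTranspose_mul_self _

end RankAux

private lemma posSemidef_vecMulVec_self' {ι : Type*} [Fintype ι] [DecidableEq ι] (v : ι → ℝ) :
    (vecMulVec v v).PosSemidef := by
  have h : vecMulVec v v = (replicateRow Unit v)ᴴ * replicateRow Unit v := by
    ext i j
    simp [Matrix.mul_apply, Matrix.vecMulVec_apply, Matrix.conjTranspose_apply,
      Matrix.replicateRow_apply]
  rw [h]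
  exact Matrix.posSemidef_conjTranspose_mul_self _

private lemma lemA {n m p : ℕ} {M : Matrix (Fin n × Fin m) (Fin n × Fin m) ℝ}
    (h : M.map Complex.ofReal ∈ SEPp ℂ n m p) :
    ∃ (k : ℕ) (X Y : Fin k → Matrix (Fin n) (Fin m) ℝ),
      (∀ j, ((X j).map Complex.ofReal + Complex.I • (Y j).map Complex.ofReal).rank ≤ p) ∧
      M = ∑ j, (vecMulVec (vecOf (X j)) (vecOf (X j))
            + vecMulVec (vecOf (Y j)) (vecOf (Y j))) := by
  obtain ⟨k, A, hrank, hsum⟩ := h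
  refine ⟨k, fun j => Matrix.of fun i l => (A j i l).re,
    fun j => Matrix.of fun i l => (A j i l).im, fun j => ?_, ?_⟩
  · have hA : (Matrix.of fun i l => (A j i l).re).map Complex.ofReal
        + Complex.I • (Matrix.of fun i l => (A j i l).im).map Complex.ofReal = A j := by
      ext i l
      simp only [Matrix.add_apply, Matrix.map_apply, Matrix.smul_apply, Matrix.of_apply,
        smul_eq_mul]
      rw [mul_comm]
      exact Complex.re_add_im _
    rw [hA]
    exact hrank j
  · ext x y
    have h2 : ((M.map Complex.ofReal) x y).re
        = ((∑ j, vecMulVec (vecOf (A j)) (star (vecOf (A j)))) x y).re := by rw [hsum]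
    simp only [Matrix.map_apply, Complex.ofReal_re, Matrix.sum_apply, Complex.re_sum,
      Matrix.vecMulVec_apply, Pi.star_apply, Complex.star_def, Complex.mul_re,
      Complex.conj_re, Complex.conj_im, mul_neg, sub_neg_eq_add, vecOf] at h2
    simp only [Matrix.sum_apply, Matrix.add_apply, Matrix.vecMulVec_apply, vecOf,
      Matrix.of_apply]
    exact h2

private lemma lemB {n m p k : ℕ} {M : Matrix (Fin n × Fin m) (Fin n × Fin m) ℝ}
    (X Y : Fin k → Matrix (Fin n) (Fin m) ℝ)
    (hr : ∀ j, ((X j).map Complex.ofReal + Complex.I • (Y j).map Complex.ofReal).rank ≤ p)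
    (hM : M = ∑ j, (vecMulVec (vecOf (X j)) (vecOf (X j))
          + vecMulVec (vecOf (Y j)) (vecOf (Y j)))) :
    M.PosSemidef ∧ M.map Complex.ofReal ∈ SEPp ℂ n m p := by
  constructor
  · rw [hM]
    exact Finset.sum_induction _ (fun Q : Matrix (Fin n × Fin m) (Fin n × Fin m) ℝ => Q.PosSemidef)
      (fun a b ha hb => ha.add hb) Matrix.PosSemidef.zero
      (fun j _ => (posSemidef_vecMulVec_self' _).add (posSemidef_vecMulVec_self' _))
  · set C : Fin k → Matrix (Fin n) (Fin m) ℂ :=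
      fun j => (X j).map Complex.ofReal + Complex.I • (Y j).map Complex.ofReal with hC
    refine ⟨k * 4, fun j' =>
      (((2:ℝ)⁻¹ : ℝ) : ℂ) • (if ((finProdFinEquiv.symm j').2 : ℕ) < 2
        then C (finProdFinEquiv.symm j').1
        else (C (finProdFinEquiv.symm j').1).map (starRingEnd ℂ)), fun j' => ?_, ?_⟩
    · refine le_trans (matrix_rank_smul_le _ _) ?_
      split_ifs
      · exact hr _
      · rw [rank_conj]
        exact hr _
    · refine Eq.trans ?_ (Fintype.sum_equiv
        (finProdFinEquiv.symm : Fin (k * 4) ≃ Fin k × Fin 4) _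
        (fun q => vecMulVec
          (vecOf ((((2:ℝ)⁻¹ : ℝ) : ℂ) • (if (q.2 : ℕ) < 2 then C q.1
            else (C q.1).map (starRingEnd ℂ))))
          (star (vecOf ((((2:ℝ)⁻¹ : ℝ) : ℂ) • (if (q.2 : ℕ) < 2 then C q.1
            else (C q.1).map (starRingEnd ℂ)))))) (fun x => rfl)).symm
      rw [hM, Fintype.sum_prod_type]
      have hmap : (∑ j, (vecMulVec (vecOf (X j)) (vecOf (X j))
          + vecMulVec (vecOf (Y j)) (vecOf (Y j)))).map Complex.ofReal
          = ∑ j, ((vecMulVec (vecOf (X j)) (vecOf (X j))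
          + vecMulVec (vecOf (Y j)) (vecOf (Y j))).map Complex.ofReal) := by
        ext x y
        simp [Matrix.map_apply, Matrix.sum_apply]
      rw [hmap]
      refine Finset.sum_congr rfl fun j _ => ?_
      rw [Fin.sum_univ_four, if_pos (by decide : ((0 : Fin 4) : ℕ) < 2),
        if_pos (by decide : ((1 : Fin 4) : ℕ) < 2),
        if_neg (by decide : ¬ ((2 : Fin 4) : ℕ) < 2),
        if_neg (by decide : ¬ ((3 : Fin 4) : ℕ) < 2)]
      ext x y
      simp only [hC, Matrix.map_apply, Matrix.add_apply, Matrix.smul_apply,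
        Matrix.vecMulVec_apply, vecOf, Pi.star_apply, Complex.star_def, smul_eq_mul,
        map_add, _root_.map_mul, Complex.conj_ofReal, Complex.conj_I,
        Complex.ofReal_add, Complex.ofReal_mul]
      apply Complex.ext <;>
        simp [Complex.mul_re, Complex.mul_im] <;> ring

private lemma lemC {n m p k : ℕ} {M : Matrix (Fin n × Fin m) (Fin n × Fin m) ℝ}
    (X Y : Fin k → Matrix (Fin n) (Fin m) ℝ)
    (hr : ∀ j, ((X j).map Complex.ofReal + Complex.I • (Y j).map Complex.ofReal).rank ≤ p)
    (hM : M = ∑ j, (vecMulVec (vecOf (X j)) (vecOf (X j))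
          + vecMulVec (vecOf (Y j)) (vecOf (Y j)))) :
    M ∈ SEPp ℝ n m (2 * p) := by
  set C : Fin k → Matrix (Fin n) (Fin m) ℂ :=
    fun j => (X j).map Complex.ofReal + Complex.I • (Y j).map Complex.ofReal with hC
  have hX : ∀ j, (X j).rank ≤ 2 * p := by
    intro j
    have h2 : (X j).map Complex.ofReal
        = (((2:ℝ)⁻¹ : ℝ) : ℂ) • (C j + (C j).map (starRingEnd ℂ)) := by
      ext i l
      simp only [hC, Matrix.map_apply, Matrix.smul_apply, Matrix.add_apply, smul_eq_mul,
        map_add, _root_.map_mul, Complex.conj_ofReal, Complex.conj_I]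
      apply Complex.ext <;> simp [Complex.mul_re, Complex.mul_im] <;> ring
    refine le_trans (rank_le_rank_map_ofReal _) ?_
    rw [h2]
    refine le_trans (matrix_rank_smul_le _ _) ?_
    refine le_trans (matrix_rank_add_le _ _) ?_
    rw [two_mul]
    exact add_le_add (hr j) ((rank_conj _).trans_le (hr j))
  have hY : ∀ j, (Y j).rank ≤ 2 * p := by
    intro j
    have h2 : (Y j).map Complex.ofReal
        = (-(Complex.I) * (((2:ℝ)⁻¹ : ℝ) : ℂ)) • (C j + (-1 : ℂ) • (C j).map (starRingEnd ℂ)) := by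
      ext i l
      simp only [hC, Matrix.map_apply, Matrix.smul_apply, Matrix.add_apply, smul_eq_mul,
        map_add, _root_.map_mul, Complex.conj_ofReal, Complex.conj_I]
      apply Complex.ext <;> simp [Complex.mul_re, Complex.mul_im] <;> ring
    refine le_trans (rank_le_rank_map_ofReal _) ?_
    rw [h2]
    refine le_trans (matrix_rank_smul_le _ _) ?_
    refine le_trans (matrix_rank_add_le _ _) ?_
    rw [two_mul]
    exact add_le_add (hr j)
      ((matrix_rank_smul_le _ _).trans ((rank_conj _).trans_le (hr j)))
  refine ⟨k * 2, fun j' => if ((finProdFinEquiv.symm j').2 : ℕ) = 0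
      then X (finProdFinEquiv.symm j').1 else Y (finProdFinEquiv.symm j').1,
      fun j' => ?_, ?_⟩
  · dsimp only
    split_ifs
    · exact hX _
    · exact hY _
  · refine Eq.trans ?_ (Fintype.sum_equiv
      (finProdFinEquiv.symm : Fin (k * 2) ≃ Fin k × Fin 2) _
      (fun q => vecMulVec (vecOf (if (q.2 : ℕ) = 0 then X q.1 else Y q.1))
        (star (vecOf (if (q.2 : ℕ) = 0 then X q.1 else Y q.1)))) (fun x => rfl)).symm
    rw [hM, Fintype.sum_prod_type]
    refine Finset.sum_congr rfl fun j _ => ?_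
    rw [Fin.sum_univ_two, if_pos (by decide : ((0 : Fin 2) : ℕ) = 0),
      if_neg (by decide : ¬ ((1 : Fin 2) : ℕ) = 0)]
    simp [star_trivial]

end AuxStmt12

/-- `CSEP_p(ℝⁿ⊗ℝᵐ)` equals the set of sums `∑ⱼ Vec(Xⱼ)Vec(Xⱼ)ᵗ + Vec(Yⱼ)Vec(Yⱼ)ᵗ` with
`rank(Xⱼ + iYⱼ) ≤ p`, and is contained in `SEP_{2p}(ℝⁿ⊗ℝᵐ)`. -/
theorem stmt12 {n m : ℕ} (p : ℕ) :
    {M : Matrix (Fin n × Fin m) (Fin n × Fin m) ℝ |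
        M.PosSemidef ∧ M.map Complex.ofReal ∈ SEPp ℂ n m p} =
      {M | ∃ (k : ℕ) (X Y : Fin k → Matrix (Fin n) (Fin m) ℝ),
        (∀ j, ((X j).map Complex.ofReal + Complex.I • (Y j).map Complex.ofReal).rank ≤ p) ∧
        M = ∑ j, (vecMulVec (vecOf (X j)) (vecOf (X j))
              + vecMulVec (vecOf (Y j)) (vecOf (Y j)))} ∧
    {M : Matrix (Fin n × Fin m) (Fin n × Fin m) ℝ |
        M.PosSemidef ∧ M.map Complex.ofReal ∈ SEPp ℂ n m p} ⊆ SEPp ℝ n m (2 * p) := by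
  constructor
  · ext M
    simp only [Set.mem_setOf_eq]
    constructor
    · rintro ⟨-, hsep⟩
      exact lemA hsep
    · rintro ⟨k, X, Y, hrk, hM⟩
      exact lemB X Y hrk hM
  · rintro M ⟨-, hsep⟩
    obtain ⟨k, X, Y, hrk, hM⟩ := lemA hsep
    exact lemC X Y hrk hM
end

section
/- Let Φ : M_n(𝕂) → M_m(𝕂) be a linear map commuting with the adjoint, with Choi matrix C_Φ. Then Φ is p-positive if and only if Tr(C_Φ P) ≥ 0 for all P ∈ SEP_p(𝕂ⁿ⊗𝕂ᵐ). -/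
open Matrix
open scoped ComplexOrder Kronecker

section Aux

variable {𝕜 : Type*} [RCLike 𝕜] {n m p : ℕ}

private lemma sum_reorder6' {α β γ δ ε ζ M : Type*} [Fintype α] [Fintype β] [Fintype γ]
    [Fintype δ] [Fintype ε] [Fintype ζ] [AddCommMonoid M]
    (f : α → β → γ → δ → ε → ζ → M) :
    ∑ a : α, ∑ s : β, ∑ b : γ, ∑ t : δ, ∑ i : ε, ∑ j : ζ, f a s b t i j
    = ∑ i : ε, ∑ a : α, ∑ j : ζ, ∑ b : γ, ∑ s : β, ∑ t : δ, f a s b t i j := by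
  conv_lhs => enter [2, a, 2, s, 2, b]; rw [Finset.sum_comm]
  conv_lhs => enter [2, a, 2, s]; rw [Finset.sum_comm]
  conv_lhs => enter [2, a]; rw [Finset.sum_comm]
  rw [Finset.sum_comm]
  conv_lhs => enter [2, i, 2, a, 2, s, 2, b]; rw [Finset.sum_comm]
  conv_lhs => enter [2, i, 2, a, 2, s]; rw [Finset.sum_comm]
  conv_lhs => enter [2, i, 2, a]; rw [Finset.sum_comm]
  conv_lhs => enter [2, i, 2, a, 2, j]; rw [Finset.sum_comm]

private lemma choi_apply' (Φ : Matrix (Fin n) (Fin n) 𝕜 → Matrix (Fin m) (Fin m) 𝕜)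
    (i : Fin n) (a : Fin m) (j : Fin n) (b : Fin m) :
    choi Φ (i, a) (j, b) = Φ (Matrix.single i j 1) a b := by
  simp [choi, Matrix.sum_apply, Matrix.single, ite_and]

private lemma phi_apply_expand (Φ : Matrix (Fin n) (Fin n) 𝕜 →ₗ[𝕜] Matrix (Fin m) (Fin m) 𝕜)
    (M : Matrix (Fin n) (Fin n) 𝕜) (a b : Fin m) :
    Φ M a b = ∑ i, ∑ j, M i j * Φ (Matrix.single i j 1) a b := by
  conv_lhs => rw [matrix_eq_sum_single M]
  rw [map_sum]
  simp only [map_sum, Matrix.sum_apply]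
  congr 1; ext i; congr 1; ext j
  rw [show Matrix.single i j (M i j) = M i j • Matrix.single i j (1:𝕜) by simp,
    _root_.map_smul]
  simp

private lemma trace_form (Φ : Matrix (Fin n) (Fin n) 𝕜 → Matrix (Fin m) (Fin m) 𝕜)
    (v : Fin n × Fin m → 𝕜) :
    (choi Φ * vecMulVec v (star v)).trace
    = ∑ i, ∑ a, ∑ j, ∑ b,
        Φ (Matrix.single i j 1) a b * (v (j,b) * (starRingEnd 𝕜) (v (i,a))) := by
  simp [Matrix.trace, Matrix.mul_apply, vecMulVec_apply, Matrix.diag,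
    Fintype.sum_prod_type, choi_apply', mul_assoc]

private lemma amp_entry (Φ : Matrix (Fin n) (Fin n) 𝕜 →ₗ[𝕜] Matrix (Fin m) (Fin m) 𝕜)
    (V : Fin n × Fin p → 𝕜) (s t : Fin p) (a b : Fin m) :
    Φ (Matrix.of fun i j => V (i,s) * star (V (j,t))) a b
    = ∑ i, ∑ j, V (i,s) * (starRingEnd 𝕜) (V (j,t)) * Φ (Matrix.single i j 1) a b := by
  rw [phi_apply_expand]; simp

/-- The key identity: the quadratic form of the ampliation applied to a rank-one
projection equals a trace against the Choi matrix. -/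
private lemma key_identity (Φ : Matrix (Fin n) (Fin n) 𝕜 →ₗ[𝕜] Matrix (Fin m) (Fin m) 𝕜)
    (V : Fin n × Fin p → 𝕜) (w : Fin m × Fin p → 𝕜) :
    star w ⬝ᵥ (amplify ⇑Φ p (vecMulVec V (star V)) *ᵥ w)
    = (choi ⇑Φ * vecMulVec (vecOf (Matrix.of fun i a =>
        ∑ s, (starRingEnd 𝕜) (V (i,s)) * w (a,s)))
        (star (vecOf (Matrix.of fun i a => ∑ s, (starRingEnd 𝕜) (V (i,s)) * w (a,s))))).trace := by
  rw [trace_form]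
  simp only [dotProduct, mulVec, amplify, Matrix.of_apply, Pi.star_apply,
    Fintype.sum_prod_type, vecOf, vecMulVec_apply, map_sum, _root_.map_mul, RingHom.id_apply,
    RCLike.conj_conj, Finset.mul_sum, Finset.sum_mul]
  simp only [amp_entry Φ, Finset.mul_sum, Finset.sum_mul]
  rw [sum_reorder6']
  refine Finset.sum_congr rfl fun i _ => Finset.sum_congr rfl fun a _ =>
    Finset.sum_congr rfl fun j _ => Finset.sum_congr rfl fun b _ =>
    Finset.sum_congr rfl fun s _ => Finset.sum_congr rfl fun t _ => ?_
  simp only [Pi.star_apply, RCLike.star_def]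
  ring

private lemma exists_factorization {A : Matrix (Fin n) (Fin m) 𝕜} (h : A.rank ≤ p) :
    ∃ (B : Matrix (Fin n) (Fin p) 𝕜) (C : Matrix (Fin p) (Fin m) 𝕜), A = B * C := by
  classical
  set W := LinearMap.range A.mulVecLin with hW
  have hfin : Module.finrank 𝕜 W ≤ p := h
  let b := Module.finBasis 𝕜 W
  let u : Fin p → (Fin n → 𝕜) := fun s =>
    if hs : (s : ℕ) < Module.finrank 𝕜 W then (b ⟨s, hs⟩ : Fin n → 𝕜) else 0
  have hmem : ∀ x : Fin n → 𝕜, x ∈ W → x ∈ Submodule.span 𝕜 (Set.range u) := by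
    intro x hx
    have hxr : (⟨x, hx⟩ : W) = ∑ k, b.repr ⟨x, hx⟩ k • b k := (b.sum_repr _).symm
    have hxc : x = ∑ k, b.repr ⟨x, hx⟩ k • (b k : Fin n → 𝕜) := by
      have := congrArg (Subtype.val) hxr
      simpa only [Submodule.coe_sum, Submodule.coe_smul] using this
    rw [hxc]
    refine Submodule.sum_mem _ fun k _ => Submodule.smul_mem _ _ (Submodule.subset_span ?_)
    refine ⟨⟨(k : ℕ), lt_of_lt_of_le k.2 hfin⟩, ?_⟩
    simp only [u, dif_pos k.2]
  have hcol : ∀ j : Fin m, ∃ c : Fin p → 𝕜, ∑ s, c s • u s = (fun i => A i j) := by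
    intro j
    have : (fun i => A i j) ∈ W := ⟨Pi.single j 1, by
      rw [mulVecLin_apply, mulVec_single_one]; rfl⟩
    exact (Submodule.mem_span_range_iff_exists_fun 𝕜).mp (hmem _ this)
  choose c hc using hcol
  refine ⟨Matrix.of fun i s => u s i, Matrix.of fun s j => c j s, ?_⟩
  ext i j
  have := congrFun (hc j) i
  simp only [Finset.sum_apply, Pi.smul_apply, smul_eq_mul] at this
  rw [Matrix.mul_apply, ← this]
  exact Finset.sum_congr rfl fun s _ => mul_comm _ _

private lemma posSemidef_vecMulVec' {ι : Type*} [Fintype ι] (v : ι → 𝕜) :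
    (vecMulVec v (star v)).PosSemidef := by
  refine Matrix.PosSemidef.of_dotProduct_mulVec_nonneg ?_ ?_
  · ext x y
    simp [vecMulVec_apply, conjTranspose_apply, mul_comm]
  · intro x
    have : star x ⬝ᵥ (vecMulVec v (star v) *ᵥ x) = star (star v ⬝ᵥ x) * (star v ⬝ᵥ x) := by
      simp only [dotProduct, mulVec, vecMulVec_apply, Pi.star_apply, star_sum, star_mul',
        star_star, Finset.sum_mul, Finset.mul_sum]
      rw [Finset.sum_comm]
      exact Finset.sum_congr rfl fun i _ => Finset.sum_congr rfl fun j _ => by ring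
    rw [this]
    exact star_mul_self_nonneg _

private lemma amplify_conjTranspose (Φ : Matrix (Fin n) (Fin n) 𝕜 → Matrix (Fin m) (Fin m) 𝕜)
    (hadj : ∀ A, Φ Aᴴ = (Φ A)ᴴ) (M : Matrix (Fin n × Fin p) (Fin n × Fin p) 𝕜) :
    amplify Φ p Mᴴ = (amplify Φ p M)ᴴ := by
  ext x y
  have h1 : (Matrix.of fun i j => Mᴴ (i, x.2) (j, y.2))
      = (Matrix.of fun i j => M (i, y.2) (j, x.2))ᴴ := by
    ext i j; simp [conjTranspose_apply]
  rw [show amplify Φ p Mᴴ x y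
      = Φ ((Matrix.of fun i j => M (i, y.2) (j, x.2))ᴴ) x.1 y.1 from by rw [← h1]; rfl,
    hadj]
  rfl

private lemma amplify_sum {ι : Type*} [Fintype ι]
    (Φ : Matrix (Fin n) (Fin n) 𝕜 →ₗ[𝕜] Matrix (Fin m) (Fin m) 𝕜)
    (M : ι → Matrix (Fin n × Fin p) (Fin n × Fin p) 𝕜) :
    amplify ⇑Φ p (∑ j, M j) = ∑ j, amplify ⇑Φ p (M j) := by
  ext x y
  have h1 : (Matrix.of fun i j => (∑ l, M l) (i, x.2) (j, y.2))
      = ∑ l, Matrix.of fun i j => M l (i, x.2) (j, y.2) := by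
    ext i j; simp [Matrix.sum_apply]
  rw [show amplify ⇑Φ p (∑ j, M j) x y
      = Φ (∑ l, Matrix.of fun i j => M l (i, x.2) (j, y.2)) x.1 y.1 from by rw [← h1]; rfl,
    map_sum]
  simp [Matrix.sum_apply, amplify]

private lemma quad_sum {ι κ : Type*} [Fintype ι] [Fintype κ]
    (N : ι → Matrix κ κ 𝕜) (w : κ → 𝕜) :
    star w ⬝ᵥ ((∑ k, N k) *ᵥ w) = ∑ k, star w ⬝ᵥ (N k *ᵥ w) := by
  simp only [dotProduct, mulVec, Matrix.sum_apply, Finset.sum_mul, Finset.mul_sum,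
    Finset.sum_apply, Pi.star_apply]
  conv_lhs => enter [2, x]; rw [Finset.sum_comm]
  rw [Finset.sum_comm]

end Aux

/-- A linear map commuting with the adjoint is `p`-positive if and only if
`Tr(C_Φ P) ≥ 0` for all `P ∈ SEP_p`. -/
theorem stmt13 {𝕜 : Type*} [RCLike 𝕜] {n m : ℕ} (p : ℕ)
    (Φ : Matrix (Fin n) (Fin n) 𝕜 →ₗ[𝕜] Matrix (Fin m) (Fin m) 𝕜)
    (hadj : ∀ A, Φ Aᴴ = (Φ A)ᴴ) :
    IsPPositive p ⇑Φ ↔ ∀ P ∈ SEPp 𝕜 n m p, 0 ≤ (choi ⇑Φ * P).trace := by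
  constructor
  · rintro hpos P ⟨k, A, hrank, rfl⟩
    rw [Finset.mul_sum, Matrix.trace_sum]
    refine Finset.sum_nonneg fun l _ => ?_
    obtain ⟨B, C, hBC⟩ := exists_factorization (hrank l)
    set V : Fin n × Fin p → 𝕜 := fun x => (starRingEnd 𝕜) (B x.1 x.2) with hV
    set w : Fin m × Fin p → 𝕜 := fun x => C x.2 x.1 with hw
    have hA : A l = Matrix.of fun i a => ∑ s, (starRingEnd 𝕜) (V (i,s)) * w (a,s) := by
      ext i a
      simp [hBC, Matrix.mul_apply, hV, hw]
    rw [hA, ← key_identity]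
    exact (hpos.2 _ (posSemidef_vecMulVec' V)).dotProduct_mulVec_nonneg w
  · intro h
    constructor
    · exact amplify_conjTranspose ⇑Φ hadj
    · intro M hM
      refine Matrix.PosSemidef.of_dotProduct_mulVec_nonneg ?_ ?_
      · show (amplify ⇑Φ p M)ᴴ = amplify ⇑Φ p M
        rw [← amplify_conjTranspose ⇑Φ hadj, hM.1.eq]
      · intro w
        obtain ⟨B, hB⟩ := (by open scoped MatrixOrder in exact CStarAlgebra.nonneg_iff_eq_star_mul_self.mp hM.nonneg)
        have hdecomp : M = ∑ k : Fin n × Fin p,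
            vecMulVec (fun x => (starRingEnd 𝕜) (B k x))
              (star fun x => (starRingEnd 𝕜) (B k x)) := by
          ext x y
          simp [hB, star_eq_conjTranspose, Matrix.mul_apply, vecMulVec_apply, conjTranspose_apply, Matrix.sum_apply]
        rw [hdecomp, amplify_sum, quad_sum]
        refine Finset.sum_nonneg fun k _ => ?_
        rw [key_identity]
        refine h _ ⟨1, fun _ => Matrix.of fun i a =>
          ∑ s, (starRingEnd 𝕜) ((starRingEnd 𝕜) (B k (i,s))) * w (a,s), fun _ => ?_, by simp⟩
        have hfact : (Matrix.of fun i a =>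
            ∑ s, (starRingEnd 𝕜) ((starRingEnd 𝕜) (B k (i,s))) * w (a,s))
            = (Matrix.of fun i s => (starRingEnd 𝕜) ((starRingEnd 𝕜) (B k (i,s)))) *
              (Matrix.of fun (s : Fin p) a => w (a,s)) := by
          ext i a; simp [Matrix.mul_apply]
        rw [hfact]
        exact le_trans (Matrix.rank_mul_le_right _ _) (Matrix.rank_le_height _)
end
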